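/- arXiv:2502.17869 — 6 statements merged into one kernel-verified Lean document; each statement's English description precedes it below -/
import Mathlib

section
/- Let n agents with binary valuations v_i : M → {0,1} and heterogeneous quantiles τ_i ∈ [0,1] receive a balanced allocation (each agent gets k = m/n items). Define k_i = min(k, k − ⌈τ_i k⌉ + 1). Then there exists a balanced allocation in which every agent's quantile value equals 1 if and only if there exists a system of pairwise disjoint sets (T_i)_{i∈N} with T_i ⊆ {g : v_i(g)=1} and |T_i| = k_i. -/
/-!
A sorted 0/1 list is a block of zeros followed by a block of ones, so the τ-quantile of a
`k`-bundle is 1 exactly when the bundle holds at least `kᵢ = min k (k - ⌈τk⌉ + 1)` items of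
value 1. A good balanced allocation therefore contains the required disjoint sets `Tᵢ`;
conversely, disjoint `Tᵢ` with `|Tᵢ| ≤ k` are topped up to `k` items each by distributing the
`kn - ∑ |Tᵢ|` unused items, and `n` disjoint bundles of size `k` exhaust the `kn` items.
-/

/-- The τ-quantile value of a finite bundle `S`: the `⌈τ|S|⌉`-th smallest item value
(the minimum when τ = 0, by convention of index 1). Empty bundles get value 0. -/
noncomputable def quantVal {α : Type*} (τ : ℝ) (v : α → ℝ) (S : Finset α) : ℝ :=
  ((S.val.map v).sort (· ≤ ·)).getD (⌈τ * (S.card : ℝ)⌉.toNat - 1) 0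

open Finset Function

theorem Multiset.sort_eq_replicate_zero_append_replicate_one {s : Multiset ℝ}
    (hs : ∀ x ∈ s, x = 0 ∨ x = 1) :
    s.sort (· ≤ ·) = List.replicate (s.count 0) 0 ++ List.replicate (s.count 1) 1 := by
  refine List.Perm.eq_of_pairwise' (s.pairwise_sort _) ?_ ?_
  · simp [List.pairwise_append, List.pairwise_replicate]
  · rw [← Multiset.coe_eq_coe, Multiset.sort_eq, ← Multiset.coe_add]
    ext x
    rw [Multiset.count_add]
    simp only [Multiset.coe_count, List.count_replicate, beq_iff_eq]
    by_cases h0 : x = 0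
    · simp [h0]
    by_cases h1 : x = 1
    · simp [h1]
    rw [Multiset.count_eq_zero.2 fun hx => (hs x hx).elim h0 h1]
    simp [Ne.symm h0, Ne.symm h1]

theorem List.getD_replicate_zero_append_replicate_one {a b i : ℕ} (hi : i < a + b) :
    (List.replicate a (0 : ℝ) ++ List.replicate b 1).getD i 0 = 1 ↔ a ≤ i := by
  rw [List.getD_eq_getElem _ _ (by simpa using hi), List.getElem_append]
  split_ifs with h <;> simp at h ⊢ <;> omega

theorem Int.toNat_ceil_mul_le {τ : ℝ} (hτ : τ ≤ 1) (k : ℕ) : ⌈τ * k⌉.toNat ≤ k := by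
  have : ⌈τ * k⌉ ≤ k := Int.ceil_le.2 (by push_cast; nlinarith)
  omega

theorem quantVal_eq_one_iff {α : Type*} {τ : ℝ} {v : α → ℝ} {S : Finset α}
    (hv : ∀ g ∈ S, v g = 0 ∨ v g = 1) (hS : S.Nonempty) (hτ : τ ≤ 1) :
    quantVal τ v S = 1 ↔ min #S (#S - ⌈τ * #S⌉.toNat + 1) ≤ #{g ∈ S | v g = 1} := by
  have hbin : ∀ x ∈ S.val.map v, x = 0 ∨ x = 1 := by simpa using hv
  have hsort := Multiset.sort_eq_replicate_zero_append_replicate_one hbin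
  have hcard : (S.val.map v).count 0 + (S.val.map v).count 1 = #S := by
    simpa using (congrArg List.length hsort).symm
  have hones : (S.val.map v).count 1 = #{g ∈ S | v g = 1} := by
    simp [Multiset.count_map, card_def, filter_val, eq_comm]
  have hτS := Int.toNat_ceil_mul_le hτ #S
  have hpos := hS.card_pos
  rw [quantVal, hsort, List.getD_replicate_zero_append_replicate_one (by omega)]
  omega

theorem Finset.exists_pairwiseDisjoint_subsets_card_eq {ι α : Type*} [Fintype ι]
    (R : Finset α) (f : ι → ℕ) (hf : ∑ i, f i ≤ #R) :
    ∃ g : ι → Finset α, Pairwise (Disjoint on g) ∧ ∀ i, g i ⊆ R ∧ #(g i) = f i := by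
  obtain ⟨e⟩ : Nonempty ((Σ i, Fin (f i)) ↪ R) :=
    Embedding.nonempty_of_card_le (by simpa using hf)
  let slot (i : ι) : Fin (f i) ↪ α :=
    ⟨fun j => e ⟨i, j⟩, Subtype.val_injective.comp (e.injective.comp sigma_mk_injective)⟩
  refine ⟨fun i => univ.map (slot i), fun i i' hii' => ?_, fun i => ⟨?_, by simp⟩⟩
  · refine disjoint_left.2 fun x hx hx' => hii' ?_
    obtain ⟨j, -, rfl⟩ := mem_map.1 hx
    obtain ⟨j', -, hjj'⟩ := mem_map.1 hx'
    exact congrArg Sigma.fst (e.injective (Subtype.val_injective hjj')).symm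
  · rintro x hx
    obtain ⟨j, -, rfl⟩ := mem_map.1 hx
    exact (e ⟨i, j⟩).2

theorem Finset.exists_pairwiseDisjoint_supsets_card_eq {ι M : Type*} [Fintype ι] [Fintype M]
    [DecidableEq M] {k : ℕ} (hm : Fintype.card M = k * Fintype.card ι) {T : ι → Finset M}
    (hT : Pairwise (Disjoint on T)) (hTk : ∀ i, #(T i) ≤ k) :
    ∃ A : ι → Finset M, Pairwise (Disjoint on A) ∧ ∀ i, T i ⊆ A i ∧ #(A i) = k := by
  set R := (univ.biUnion T)ᶜ
  have hfree : ∑ i, (k - #(T i)) ≤ #R := by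
    rw [sum_tsub_distrib _ fun i _ => hTk i, card_compl, card_biUnion fun i _ j _ h => hT h]
    simp [hm, mul_comm]
  obtain ⟨g, hg, hgR⟩ := exists_pairwiseDisjoint_subsets_card_eq R _ hfree
  have hTg : ∀ i j, Disjoint (T i) (g j) := fun i j =>
    disjoint_compl_right.mono (subset_biUnion_of_mem T (mem_univ i)) (hgR j).1
  refine ⟨fun i => T i ∪ g i, fun i j hij => ?_, fun i => ⟨subset_union_left, ?_⟩⟩
  · simp only [onFun, disjoint_union_left, disjoint_union_right]
    exact ⟨⟨hT hij, (hTg j i).symm⟩, hTg i j, hg hij⟩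
  · rw [card_union_of_disjoint (hTg i i), (hgR i).2, Nat.add_sub_cancel' (hTk i)]

theorem Finset.biUnion_eq_univ_of_pairwiseDisjoint_card_eq {ι M : Type*} [Fintype ι]
    [Fintype M] [DecidableEq M] {k : ℕ} (hm : Fintype.card M = k * Fintype.card ι)
    {A : ι → Finset M} (hA : Pairwise (Disjoint on A)) (hcard : ∀ i, #(A i) = k) :
    univ.biUnion A = univ :=
  eq_univ_of_card _ <| by simp [card_biUnion fun i _ j _ h => hA h, hcard, hm, mul_comm]

theorem balanced_esw_one_iff_matching_general (n k : ℕ) (hk : 0 < k)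
    {M : Type*} [Fintype M] [DecidableEq M] (hm : Fintype.card M = k * n)
    (v : Fin n → M → ℝ) (hbin : ∀ i g, v i g = 0 ∨ v i g = 1)
    (τ : Fin n → ℝ) (hτ : ∀ i, 0 ≤ τ i ∧ τ i ≤ 1) :
    (∃ A : Fin n → Finset M,
        (∀ i j, i ≠ j → Disjoint (A i) (A j)) ∧
        Finset.univ.biUnion A = Finset.univ ∧
        (∀ i, (A i).card = k) ∧
        (∀ i, quantVal (τ i) (v i) (A i) = 1)) ↔
      (∃ T : Fin n → Finset M,
        (∀ i j, i ≠ j → Disjoint (T i) (T j)) ∧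
        (∀ i, T i ⊆ Finset.univ.filter fun g => v i g = 1) ∧
        (∀ i, (T i).card = min k (k - (⌈τ i * (k : ℝ)⌉).toNat + 1))) := by
  have hm' : Fintype.card M = k * Fintype.card (Fin n) := by rw [hm, Fintype.card_fin]
  have hvalue : ∀ i (S : Finset M), #S = k → (quantVal (τ i) (v i) S = 1 ↔
      min k (k - ⌈τ i * k⌉.toNat + 1) ≤ #{g ∈ S | v i g = 1}) := by
    rintro i S rfl
    exact quantVal_eq_one_iff (fun g _ => hbin i g) (card_pos.1 hk) (hτ i).2
  constructor
  · rintro ⟨A, hA, -, hcard, hval⟩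
    choose T hTA hTcard using fun i => exists_subset_card_eq ((hvalue i _ (hcard i)).1 (hval i))
    refine ⟨T, fun i j hij => (hA i j hij).mono ((hTA i).trans (filter_subset _ _))
      ((hTA j).trans (filter_subset _ _)), fun i => ?_, hTcard⟩
    exact (hTA i).trans (filter_subset_filter _ (subset_univ _))
  · rintro ⟨T, hT, hTv, hTcard⟩
    obtain ⟨A, hA, hTA⟩ := exists_pairwiseDisjoint_supsets_card_eq hm' (fun i j hij => hT i j hij)
      fun i => (hTcard i).trans_le (min_le_left _ _)
    refine ⟨A, fun i j hij => hA hij, biUnion_eq_univ_of_pairwiseDisjoint_card_eq hm' hA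
      fun i => (hTA i).2, fun i => (hTA i).2, fun i => (hvalue i _ (hTA i).2).2 ?_⟩
    rw [← hTcard i]
    exact card_le_card fun g hg => mem_filter.2 ⟨(hTA i).1 hg, (mem_filter.1 (hTv i hg)).2⟩

/-- with m = kn items, binary values and heterogeneous quantiles, a
balanced allocation giving every agent quantile value 1 exists iff there is a system
of pairwise disjoint sets Tᵢ of value-1 items for i with |Tᵢ| = kᵢ = min(k, k−⌈τᵢk⌉+1). -/
theorem balanced_esw_one_iff_matching (n k : ℕ) (hn : 0 < n) (hk : 0 < k)
    {M : Type*} [Fintype M] [DecidableEq M] (hm : Fintype.card M = k * n)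
    (v : Fin n → M → ℝ) (hbin : ∀ i g, v i g = 0 ∨ v i g = 1)
    (τ : Fin n → ℝ) (hτ : ∀ i, 0 ≤ τ i ∧ τ i ≤ 1) :
    (∃ A : Fin n → Finset M,
        (∀ i j, i ≠ j → Disjoint (A i) (A j)) ∧
        Finset.univ.biUnion A = Finset.univ ∧
        (∀ i, (A i).card = k) ∧
        (∀ i, quantVal (τ i) (v i) (A i) = 1)) ↔
      (∃ T : Fin n → Finset M,
        (∀ i j, i ≠ j → Disjoint (T i) (T j)) ∧
        (∀ i, T i ⊆ Finset.univ.filter fun g => v i g = 1) ∧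
        (∀ i, (T i).card = min k (k - (⌈τ i * (k : ℝ)⌉).toNat + 1))) :=
  balanced_esw_one_iff_matching_general n k hk hm v hbin τ hτ
end

section
/- Consider n agents with quantile valuations and an allocation problem where each agent's value of a bundle is attained at a single item of the bundle (quantile property). Let A* be any allocation of all m items, and relabel agents so that v_1(A*_1) ≥ … ≥ v_n(A*_n). Then there exists an allocation A in which agents 1 through n−1 each receive a single item, agent n receives all remaining items, and the sum of values of agents 1,…,n−1 under A is at least (1 − 1/n) · Σ_j v_j(A*_j). Consequently some such 'scapegoat' allocation achieves utilitarian welfare at least (n−1)/n times the optimum. -/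
/-!
Match every agent to an item of its bundle at which the bundle's value is attained, or to a fresh
item if its bundle is empty. The bundles are disjoint and there are at least `n` items, so Hall's
theorem makes this matching injective. Each of the first `n - 1` agents then values its single
item at least as much as its bundle, and dropping the last agent, whose value is the smallest,
loses at most the average `1/n` of the welfare.
-/

open Finset Function

/-- Hall's condition holds for the sets `t i`, with every empty one replaced by the whole type:
a family containing a replaced set covers everything, and disjoint nonempty sets contribute at
least one element each. -/
theorem Finset.exists_injective_mem_of_pairwise_disjoint {ι α : Type*} [Fintype ι] [Fintype α]
    [DecidableEq α] (t : ι → Finset α) (ht : Pairwise (Disjoint on t))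
    (hcard : Fintype.card ι ≤ Fintype.card α) :
    ∃ f : ι → α, Injective f ∧ ∀ i, (t i).Nonempty → f i ∈ t i := by
  let t' : ι → Finset α := fun i => if (t i).Nonempty then t i else univ
  obtain ⟨f, hf, hft'⟩ := (all_card_le_biUnion_card_iff_exists_injective t').1 fun K => by
    by_cases hK : ∀ i ∈ K, (t i).Nonempty
    · rw [biUnion_congr rfl fun i hi => if_pos (hK i hi)]
      exact card_le_card_biUnion (fun i _ j _ hij => ht hij) hK
    · push Not at hK
      obtain ⟨i, hi, hti⟩ := hK
      calc #K ≤ Fintype.card α := (card_le_univ K).trans hcard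
        _ = #(t' i) := by simp [t', hti]
        _ ≤ #(K.biUnion t') := card_le_card (subset_biUnion_of_mem t' hi)
  exact ⟨f, hf, fun i hi => by simpa [t', hi] using hft' i⟩

theorem Finset.one_sub_one_div_card_mul_sum_le_sum_erase {ι : Type*} [Fintype ι] [DecidableEq ι]
    (a : ι → ℝ) (ℓ : ι) (hℓ : ∀ j, a ℓ ≤ a j) :
    (1 - 1 / (Fintype.card ι : ℝ)) * ∑ j, a j ≤ ∑ j ∈ univ.erase ℓ, a j := by
  have hpos : (0 : ℝ) < Fintype.card ι := Nat.cast_pos.2 (Fintype.card_pos_iff.2 ⟨ℓ⟩)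
  have hmin : (Fintype.card ι : ℝ) * a ℓ ≤ ∑ j, a j := by
    simpa using card_nsmul_le_sum univ a (a ℓ) fun j _ => hℓ j
  have hdiv : a ℓ ≤ (∑ j, a j) / Fintype.card ι := by rw [le_div_iff₀ hpos]; linarith
  calc (1 - 1 / (Fintype.card ι : ℝ)) * ∑ j, a j = ∑ j, a j - (∑ j, a j) / Fintype.card ι := by
        ring
    _ ≤ ∑ j, a j - a ℓ := by linarith
    _ = ∑ j ∈ univ.erase ℓ, a j := by rw [← add_sum_erase univ a (mem_univ ℓ)]; ring

section Scapegoat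

variable {ι α : Type*} [Fintype ι] [DecidableEq ι] [Fintype α] [DecidableEq α]

def scapegoatAllocation (ℓ : ι) (f : ι → α) (j : ι) : Finset α :=
  if j = ℓ then univ \ (univ.erase ℓ).image f else {f j}

theorem scapegoatAllocation_of_ne {ℓ j : ι} (f : ι → α) (h : j ≠ ℓ) :
    scapegoatAllocation ℓ f j = {f j} :=
  if_neg h

theorem pairwise_disjoint_scapegoatAllocation {ℓ : ι} {f : ι → α} (hf : Set.InjOn f {ℓ}ᶜ) :
    Pairwise (Disjoint on scapegoatAllocation ℓ f) := by
  have hsingle : ∀ {i j}, i ≠ ℓ → j = ℓ →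
      Disjoint (scapegoatAllocation ℓ f i) (scapegoatAllocation ℓ f j) := by
    rintro i j hi rfl
    simpa [scapegoatAllocation, hi] using ⟨i, hi, rfl⟩
  intro i j hij
  by_cases hi : i = ℓ <;> by_cases hj : j = ℓ
  · exact absurd (hi.trans hj.symm) hij
  · exact (hsingle hj hi).symm
  · exact hsingle hi hj
  · change Disjoint _ _
    rw [scapegoatAllocation_of_ne f hi, scapegoatAllocation_of_ne f hj, disjoint_singleton]
    exact hij ∘ hf hi hj

theorem biUnion_scapegoatAllocation (ℓ : ι) (f : ι → α) :
    univ.biUnion (scapegoatAllocation ℓ f) = univ := by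
  refine eq_univ_of_forall fun x => mem_biUnion.2 ?_
  by_cases hx : x ∈ (univ.erase ℓ).image f
  · obtain ⟨j, hj, rfl⟩ := mem_image.1 hx
    exact ⟨j, mem_univ j, by simp [scapegoatAllocation_of_ne f (ne_of_mem_erase hj)]⟩
  · exact ⟨ℓ, mem_univ ℓ, by simp [scapegoatAllocation, hx]⟩

end Scapegoat

theorem quantile_singleton {α β : Type*} {v : Finset α → β} {w : α → β}
    (hquant : ∀ S : Finset α, S.Nonempty → ∃ g ∈ S, v S = w g) (g : α) : v {g} = w g := by
  obtain ⟨g', hg', hv⟩ := hquant {g} (singleton_nonempty g)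
  rwa [mem_singleton.1 hg'] at hv

theorem Fin.filter_val_lt_sub_one_eq_erase {n : ℕ} (hn : 0 < n) :
    univ.filter (fun j : Fin n => (j : ℕ) < n - 1) = univ.erase ⟨n - 1, by omega⟩ := by
  ext j
  simp only [mem_filter, mem_univ, true_and, mem_erase, ne_eq, Fin.ext_iff, and_true]
  have := j.isLt
  omega

theorem scapegoat_allocation_general (n : ℕ) (hn : 2 ≤ n)
    {M : Type*} [Fintype M] [DecidableEq M] (hM : n ≤ Fintype.card M)
    (w : Fin n → M → ℝ) (hw : ∀ j g, 0 ≤ w j g)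
    (v : Fin n → Finset M → ℝ)
    (hquant : ∀ j (S : Finset M), S.Nonempty → ∃ g ∈ S, v j S = w j g)
    (hempty : ∀ j, v j ∅ = 0)
    (Astar : Fin n → Finset M)
    (hdisj : ∀ i j, i ≠ j → Disjoint (Astar i) (Astar j))
    (hsorted : ∀ i j : Fin n, i ≤ j → v j (Astar j) ≤ v i (Astar i)) :
    ∃ A : Fin n → Finset M,
      (∀ i j, i ≠ j → Disjoint (A i) (A j)) ∧
      Finset.univ.biUnion A = Finset.univ ∧
      (∀ j : Fin n, (j : ℕ) < n - 1 → (A j).card = 1) ∧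
      (1 - 1 / (n : ℝ)) * ∑ j, v j (Astar j) ≤
        ∑ j ∈ Finset.univ.filter (fun j : Fin n => (j : ℕ) < n - 1), v j (A j) := by
  have hn₀ : 0 < n := by omega
  set ℓ : Fin n := ⟨n - 1, by omega⟩
  -- Each agent is matched to an item realising the value of its bundle, or to a fresh item.
  obtain ⟨f, hf, hfW⟩ := exists_injective_mem_of_pairwise_disjoint
    (fun j => (Astar j).filter fun g => v j (Astar j) = w j g)
    (fun i j hij => (hdisj i j hij).mono (filter_subset _ _) (filter_subset _ _))
    (by simpa using hM)
  have hvalue : ∀ j, v j (Astar j) ≤ v j {f j} := by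
    intro j
    rw [quantile_singleton (hquant j)]
    rcases (Astar j).eq_empty_or_nonempty with hj | hj
    · rw [hj, hempty]
      exact hw j (f j)
    · obtain ⟨g, hg, hvg⟩ := hquant j _ hj
      exact (mem_filter.1 (hfW j ⟨g, mem_filter.2 ⟨hg, hvg⟩⟩)).2.le
  refine ⟨scapegoatAllocation ℓ f,
    fun i j hij => pairwise_disjoint_scapegoatAllocation hf.injOn hij,
    biUnion_scapegoatAllocation ℓ f, fun j hj => ?_, ?_⟩
  · rw [scapegoatAllocation_of_ne f (by simp [ℓ, Fin.ext_iff]; omega), card_singleton]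
  rw [Fin.filter_val_lt_sub_one_eq_erase hn₀]
  calc (1 - 1 / (n : ℝ)) * ∑ j, v j (Astar j) ≤ ∑ j ∈ univ.erase ℓ, v j (Astar j) := by
        simpa using one_sub_one_div_card_mul_sum_le_sum_erase (fun j => v j (Astar j)) ℓ
          fun j => hsorted j ℓ (Fin.le_def.2 (by simp [ℓ]; omega))
    _ ≤ ∑ j ∈ univ.erase ℓ, v j (scapegoatAllocation ℓ f j) := sum_le_sum fun j hj => by
        rw [scapegoatAllocation_of_ne f (ne_of_mem_erase hj)]
        exact hvalue j

/-- scapegoat allocations. For quantile valuations over goods (bundle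
value attained at some item, item values nonnegative), given any allocation A* with
agents sorted by value, there is an allocation giving agents 1,…,n−1 one item each
(agent n getting the rest) whose first n−1 values sum to at least (1 − 1/n)·USW(A*). -/
theorem scapegoat_allocation (n : ℕ) (hn : 2 ≤ n)
    {M : Type*} [Fintype M] [DecidableEq M] (hM : n ≤ Fintype.card M)
    (w : Fin n → M → ℝ) (hw : ∀ j g, 0 ≤ w j g)
    (v : Fin n → Finset M → ℝ)
    (hquant : ∀ j (S : Finset M), S.Nonempty → ∃ g ∈ S, v j S = w j g)
    (hempty : ∀ j, v j ∅ = 0)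
    (Astar : Fin n → Finset M)
    (hdisj : ∀ i j, i ≠ j → Disjoint (Astar i) (Astar j))
    (hcover : Finset.univ.biUnion Astar = Finset.univ)
    (hsorted : ∀ i j : Fin n, i ≤ j → v j (Astar j) ≤ v i (Astar i)) :
    ∃ A : Fin n → Finset M,
      (∀ i j, i ≠ j → Disjoint (A i) (A j)) ∧
      Finset.univ.biUnion A = Finset.univ ∧
      (∀ j : Fin n, (j : ℕ) < n - 1 → (A j).card = 1) ∧
      (1 - 1 / (n : ℝ)) * ∑ j, v j (Astar j) ≤
        ∑ j ∈ Finset.univ.filter (fun j : Fin n => (j : ℕ) < n - 1), v j (A j) :=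
  scapegoat_allocation_general n hn hM w hw v hquant hempty Astar hdisj hsorted
end

section
/- For quantile valuations over goods (nonnegative item values), if some agent i* has quantile τ_{i*} = 1, then the maximum utilitarian social welfare over all allocations equals the maximum, over assignments of one distinct item to each agent j ≠ i* plus the best remaining item to i*, of the total value; equivalently, it equals the maximum weight of a perfect matching of all n agents to n distinct items in the bipartite graph with edge weight v_j(g). -/
/-!
Every allocation is dominated by a matching: in each nonempty bundle pick the item that
determines its quantile value; these items are distinct because bundles are disjoint, and
they extend to a matching of all agents since there are at least as many items as agents
(agents with empty bundles contribute `0 ≤ w j g`). Conversely every matching is dominated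
by an allocation: give each agent `j ≠ i*` its matched item alone and give `i*` everything
else, which `i*` values at least at its matched item because it values a bundle at its best item.
-/

open Finset Function

theorem Set.InjOn.exists_injective_eqOn {ι β : Type*} [Fintype ι] [Fintype β]
    {s : Set ι} {f : ι → β} (hf : s.InjOn f) (hcard : Fintype.card ι ≤ Fintype.card β) :
    ∃ g : ι → β, Injective g ∧ s.EqOn g f := by
  classical
  have hs : #(s.toFinset.image f) ≤ Fintype.card ι :=
    card_image_le.trans (card_le_univ _)
  obtain ⟨t, hst, -, ht⟩ :=
    Finset.exists_subsuperset_card_eq (Finset.subset_univ _) hs (by rwa [card_univ])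
  obtain ⟨e, he⟩ := Set.MapsTo.exists_equiv_extend_of_card_eq ht.symm
    (fun i hi => hst (Finset.mem_image_of_mem f (Set.mem_toFinset.mpr hi))) hf
  exact ⟨fun i => e i, Subtype.val_injective.comp e.injective, he⟩

theorem exists_injective_sum_le_of_pairwise_disjoint {ι M : Type*} [Fintype ι] [Fintype M]
    [Nonempty M] (hcard : Fintype.card ι ≤ Fintype.card M)
    (w : ι → M → ℝ) (hw : ∀ j g, 0 ≤ w j g) (v : ι → Finset M → ℝ)
    (hquant : ∀ j (S : Finset M), S.Nonempty → ∃ g ∈ S, v j S = w j g)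
    (hempty : ∀ j, v j ∅ = 0)
    (A : ι → Finset M) (hdisj : ∀ i j, i ≠ j → Disjoint (A i) (A j)) :
    ∃ f : ι → M, Injective f ∧ ∑ j, v j (A j) ≤ ∑ j, w j (f j) := by
  choose! g hgA hgv using fun j => hquant j (A j)
  have hg : Set.InjOn g {j | (A j).Nonempty} := fun i hi j hj hij => by
    by_contra hne
    exact disjoint_left.mp (hdisj i j hne) (hgA i hi) (hij ▸ hgA j hj)
  obtain ⟨f, hf, hfg⟩ := hg.exists_injective_eqOn hcard
  refine ⟨f, hf, sum_le_sum fun j _ => ?_⟩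
  rcases (A j).eq_empty_or_nonempty with h | h
  · rw [h, hempty]
    exact hw j (f j)
  · rw [hgv j h, hfg h]

section OptimistAllocation

variable {ι M : Type*} [Fintype ι] [DecidableEq ι] [Fintype M] [DecidableEq M]

def optimistAllocation (i : ι) (f : ι → M) (j : ι) : Finset M :=
  if j = i then ((univ.erase i).image f)ᶜ else {f j}

variable {i : ι} {f : ι → M}

theorem optimistAllocation_of_ne {j : ι} (hj : j ≠ i) : optimistAllocation i f j = {f j} :=
  if_neg hj

theorem mem_optimistAllocation {j : ι} {m : M} :
    m ∈ optimistAllocation i f j ↔ if j = i then ∀ k ≠ i, f k ≠ m else f j = m := by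
  unfold optimistAllocation
  split_ifs <;> simp [eq_comm]

theorem apply_mem_optimistAllocation (hf : Injective f) (j : ι) :
    f j ∈ optimistAllocation i f j := by
  rw [mem_optimistAllocation]
  split_ifs with hj
  · exact fun k hk hkj => hk (hf hkj ▸ hj)
  · rfl

theorem disjoint_optimistAllocation (hf : Injective f) {j k : ι} (hjk : j ≠ k) :
    Disjoint (optimistAllocation i f j) (optimistAllocation i f k) := by
  refine disjoint_left.mpr fun m hj hk => ?_
  rw [mem_optimistAllocation] at hj hk
  split_ifs at hj hk <;> grind

variable (i f) in
theorem biUnion_optimistAllocation : univ.biUnion (optimistAllocation i f) = univ := by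
  refine eq_univ_of_forall fun m => mem_biUnion.mpr ?_
  by_cases hm : ∃ k ≠ i, f k = m
  · obtain ⟨k, hk, rfl⟩ := hm
    exact ⟨k, mem_univ _, by simp [mem_optimistAllocation, hk]⟩
  · exact ⟨i, mem_univ _, by simpa [mem_optimistAllocation] using hm⟩

theorem sum_le_sum_optimistAllocation (hf : Injective f)
    (w : ι → M → ℝ) (v : ι → Finset M → ℝ)
    (hquant : ∀ j (S : Finset M), S.Nonempty → ∃ g ∈ S, v j S = w j g)
    (hstar : ∀ (S : Finset M) (hS : S.Nonempty), v i S = S.sup' hS (w i)) :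
    ∑ j, w j (f j) ≤ ∑ j, v j (optimistAllocation i f j) := by
  refine sum_le_sum fun j _ => ?_
  by_cases hj : j = i
  · subst hj
    have hfj := apply_mem_optimistAllocation (i := j) hf j
    rw [hstar _ ⟨_, hfj⟩]
    exact le_sup' _ hfj
  · obtain ⟨g, hg, hgv⟩ := hquant j {f j} (singleton_nonempty _)
    rw [optimistAllocation_of_ne hj, hgv, mem_singleton.mp hg]

end OptimistAllocation

theorem optimist_usw_eq_matching_general (n : ℕ)
    {M : Type*} [Fintype M] [DecidableEq M] (hM : n ≤ Fintype.card M)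
    (w : Fin n → M → ℝ) (hw : ∀ j g, 0 ≤ w j g)
    (v : Fin n → Finset M → ℝ)
    (hquant : ∀ j (S : Finset M), S.Nonempty → ∃ g ∈ S, v j S = w j g)
    (hempty : ∀ j, v j ∅ = 0)
    (istar : Fin n)
    (hstar : ∀ (S : Finset M) (hS : S.Nonempty), v istar S = S.sup' hS (w istar)) :
    sSup {u : ℝ | ∃ A : Fin n → Finset M,
        (∀ i j, i ≠ j → Disjoint (A i) (A j)) ∧
        Finset.univ.biUnion A = Finset.univ ∧
        u = ∑ j, v j (A j)} =
      sSup {u : ℝ | ∃ f : Fin n → M, Function.Injective f ∧ u = ∑ j, w j (f j)} := by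
  have : Nonempty M := Fintype.card_pos_iff.mp (istar.pos.trans_le hM)
  refine csSup_eq_csSup_of_forall_exists_le ?_ ?_
  · rintro _ ⟨A, hdisj, -, rfl⟩
    obtain ⟨f, hf, hle⟩ := exists_injective_sum_le_of_pairwise_disjoint
      (by rwa [Fintype.card_fin]) w hw v hquant hempty A hdisj
    exact ⟨_, ⟨f, hf, rfl⟩, hle⟩
  · rintro _ ⟨f, hf, rfl⟩
    exact ⟨_, ⟨optimistAllocation istar f, fun _ _ => disjoint_optimistAllocation hf,
      biUnion_optimistAllocation istar f, rfl⟩, sum_le_sum_optimistAllocation hf w v hquant hstar⟩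

/-- if some agent i* has quantile 1 (values a bundle at its maximum item
value), then the maximum utilitarian welfare over all allocations equals the maximum
weight of a perfect matching of the n agents to n distinct items. -/
theorem optimist_usw_eq_matching (n : ℕ) (hn : 0 < n)
    {M : Type*} [Fintype M] [DecidableEq M] (hM : n ≤ Fintype.card M)
    (w : Fin n → M → ℝ) (hw : ∀ j g, 0 ≤ w j g)
    (v : Fin n → Finset M → ℝ)
    (hquant : ∀ j (S : Finset M), S.Nonempty → ∃ g ∈ S, v j S = w j g)
    (hempty : ∀ j, v j ∅ = 0)
    (istar : Fin n)
    (hstar : ∀ (S : Finset M) (hS : S.Nonempty), v istar S = S.sup' hS (w istar)) :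
    sSup {u : ℝ | ∃ A : Fin n → Finset M,
        (∀ i j, i ≠ j → Disjoint (A i) (A j)) ∧
        Finset.univ.biUnion A = Finset.univ ∧
        u = ∑ j, v j (A j)} =
      sSup {u : ℝ | ∃ f : Fin n → M, Function.Injective f ∧ u = ∑ j, w j (f j)} :=
  optimist_usw_eq_matching_general n hM w hw v hquant hempty istar hstar
end

section
/- Let all agents have the same quantile τ = t/(t+1) (t a positive integer) and binary valuations v_i. Let M_0 = {g : v_i(g)=0 for all i} and M_1 = M \ M_0. If there exists an allocation of all items giving every agent value 1, then (i) there is a system of distinct representatives matching each agent i to a distinct item g with v_i(g)=1, and (ii) |M_0| ≤ t·|M_1| − n. -/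
open Finset Function

lemma List.Pairwise.countP_lt_le {α : Type*} [LinearOrder α] {l : List α}
    (hl : l.Pairwise (· ≤ ·)) {k : ℕ} (hk : k < l.length) {x : α} (hx : x ≤ l[k]) :
    l.countP (· < x) ≤ k := by
  have hdrop : (l.drop k).countP (· < x) = 0 := by
    refine List.countP_eq_zero.2 fun a ha => ?_
    obtain ⟨j, hj, rfl⟩ := List.getElem_of_mem ha
    rw [List.getElem_drop, decide_eq_true_iff, not_lt]
    have hj' : k + j < l.length := by simp only [List.length_drop] at hj; omega
    exact hx.trans (hl.rel_get_of_le (a := ⟨k, hk⟩) (b := ⟨k + j, hj'⟩) (by simp))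
  calc l.countP (· < x) = (l.take k).countP (· < x) := by
        conv_lhs => rw [← List.take_append_drop k l]
        rw [List.countP_append, hdrop, add_zero]
    _ ≤ k := List.countP_le_length.trans (List.length_take_le _ _)

lemma card_filter_lt_quantVal_lt {α : Type*} {τ : ℝ} (hτ : 0 < τ) (v : α → ℝ) (S : Finset α)
    (h : quantVal τ v S ≠ 0) : ((S.filter (v · < quantVal τ v S)).card : ℝ) < τ * S.card := by
  set l := (S.val.map v).sort (· ≤ ·)
  set k := ⌈τ * (S.card : ℝ)⌉.toNat - 1
  have hlen : l.length = S.card := by simp [l]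
  have hk : k < l.length := by
    by_contra hk
    exact h (List.getD_eq_default _ _ (not_lt.1 hk))
  have hq : quantVal τ v S = l[k] := List.getD_eq_getElem _ _ hk
  have hcount : (S.filter (v · < quantVal τ v S)).card = l.countP (· < quantVal τ v S) := by
    rw [← Multiset.coe_countP, Multiset.sort_eq, Multiset.countP_map]
    rfl
  have hceil : (k : ℝ) < τ * S.card := by
    have hpos : 0 < τ * S.card := mul_pos hτ (by exact_mod_cast hlen ▸ (Nat.zero_lt_of_lt hk))
    have h1 : (1 : ℤ) ≤ ⌈τ * (S.card : ℝ)⌉ := Int.one_le_ceil_iff.2 hpos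
    have h2 : (k : ℤ) + 1 = ⌈τ * (S.card : ℝ)⌉ := by omega
    have h3 := Int.ceil_lt_add_one (τ * (S.card : ℝ))
    rw [← h2] at h3
    push_cast at h3
    linarith
  calc ((S.filter (v · < quantVal τ v S)).card : ℝ) ≤ k := by
        rw [hcount]; exact_mod_cast (Multiset.pairwise_sort _ _).countP_lt_le hk hq.le
    _ < τ * S.card := hceil

lemma card_filter_eq_zero_lt_of_quantVal_eq_one {α : Type*} {t : ℕ} (ht : 0 < t) {v : α → ℝ}
    {S : Finset α} (hbin : ∀ g ∈ S, v g = 0 ∨ v g = 1)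
    (h : quantVal ((t : ℝ) / ((t : ℝ) + 1)) v S = 1) :
    (S.filter (v · = 0)).card < t * (S.filter (v · = 1)).card := by
  have hzeros : S.filter (v · < 1) = S.filter (v · = 0) :=
    filter_congr fun g hg => by rcases hbin g hg with h | h <;> simp [h]
  have hones : S.filter (¬ v · = 0) = S.filter (v · = 1) :=
    filter_congr fun g hg => by rcases hbin g hg with h | h <;> simp [h]
  have hsplit := card_filter_add_card_filter_not (s := S) (v · = 0)
  rw [hones] at hsplit
  have hlt := card_filter_lt_quantVal_lt (by positivity) v S (h ▸ one_ne_zero)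
  rw [h, hzeros, ← hsplit, div_mul_eq_mul_div, lt_div_iff₀ (by positivity)] at hlt
  push_cast at hlt
  have hreal : ((S.filter (v · = 0)).card : ℝ) < t * (S.filter (v · = 1)).card := by linarith
  exact_mod_cast hreal

lemma exists_injective_forall_mem_of_pairwise_disjoint {ι α : Type*} {B : ι → Finset α}
    (hdisj : Pairwise (Disjoint on B)) (hne : ∀ i, (B i).Nonempty) :
    ∃ f : ι → α, Injective f ∧ ∀ i, f i ∈ B i := by
  choose f hf using hne
  exact ⟨f, pairwise_ne_iff_injective.1 fun i j hij =>
    disjoint_iff_ne.1 (hdisj hij) _ (hf i) _ (hf j), hf⟩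

section Allocation

variable {ι M : Type*} [Fintype ι] [Fintype M] [DecidableEq M] (v : ι → M → ℝ)
  [DecidablePred fun g => ∀ i, v i g = 0] {A : ι → Finset M}

lemma card_filter_forall_eq_zero_le_sum (hcover : univ.biUnion A = univ) :
    (univ.filter fun g => ∀ i, v i g = 0).card ≤ ∑ i, ((A i).filter (v i · = 0)).card := by
  refine (card_le_card fun g hg => ?_).trans card_biUnion_le
  obtain ⟨i, -, hgi⟩ := mem_biUnion.1 (hcover ▸ mem_univ g)
  exact mem_biUnion.2 ⟨i, mem_univ _, mem_filter.2 ⟨hgi, (mem_filter.1 hg).2 i⟩⟩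

lemma sum_card_filter_eq_one_le (hdisj : Pairwise (Disjoint on A)) :
    ∑ i, ((A i).filter (v i · = 1)).card ≤ (univ.filter fun g => ¬ ∀ i, v i g = 0).card := by
  have hdisj' : Pairwise (Disjoint on fun i => (A i).filter (v i · = 1)) := fun i j hij =>
    (hdisj hij).mono (filter_subset _ _) (filter_subset _ _)
  rw [← card_biUnion (hdisj'.set_pairwise _)]
  refine card_le_card fun g hg => ?_
  obtain ⟨i, -, hgi⟩ := mem_biUnion.1 hg
  exact mem_filter.2 ⟨mem_univ _, fun h0 => by simp [h0 i] at hgi⟩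

end Allocation

theorem esw_one_necessary_general (n t : ℕ) (ht : 0 < t)
    {M : Type*} [Fintype M] [DecidableEq M]
    (v : Fin n → M → ℝ) (hbin : ∀ i g, v i g = 0 ∨ v i g = 1)
    (A : Fin n → Finset M)
    (hdisj : ∀ i j, i ≠ j → Disjoint (A i) (A j))
    (hcover : Finset.univ.biUnion A = Finset.univ)
    (hall : ∀ i, quantVal ((t : ℝ) / ((t : ℝ) + 1)) (v i) (A i) = 1) :
    (∃ f : Fin n → M, Function.Injective f ∧ ∀ i, v i (f i) = 1) ∧
      (((Finset.univ.filter fun g => ∀ i, v i g = 0).card : ℤ) ≤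
        (t : ℤ) * ((Finset.univ.filter fun g => ¬ ∀ i, v i g = 0).card : ℤ) - (n : ℤ)) := by
  have hcount (i : Fin n) :
      ((A i).filter (v i · = 0)).card < t * ((A i).filter (v i · = 1)).card :=
    card_filter_eq_zero_lt_of_quantVal_eq_one ht (fun g _ => hbin i g) (hall i)
  have hdisj' : Pairwise (Disjoint on A) := hdisj
  constructor
  · have hne (i : Fin n) : ((A i).filter (v i · = 1)).Nonempty :=
      card_pos.1 (Nat.pos_of_mul_pos_left (Nat.zero_lt_of_lt (hcount i)))
    obtain ⟨f, hinj, hf⟩ := exists_injective_forall_mem_of_pairwise_disjoint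
      (fun i j hij => (hdisj' hij).mono (filter_subset _ _) (filter_subset _ _)) hne
    exact ⟨f, hinj, fun i => (mem_filter.1 (hf i)).2⟩
  · have hsum : ∑ i, (((A i).filter (v i · = 0)).card + 1) ≤
        ∑ i, t * ((A i).filter (v i · = 1)).card :=
      sum_le_sum fun i _ => hcount i
    rw [sum_add_distrib, ← mul_sum] at hsum
    simp only [sum_const, card_univ, Fintype.card_fin, smul_eq_mul, mul_one] at hsum
    have hM₀ := card_filter_forall_eq_zero_le_sum v hcover
    have hM₁ := Nat.mul_le_mul_left t (sum_card_filter_eq_one_le v hdisj')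
    omega

/-- common quantile τ = t/(t+1), binary valuations. If an allocation
gives every agent quantile value 1, then (i) there is a system of distinct
representatives matching each agent to a distinct value-1 item, and
(ii) |M₀| ≤ t·|M₁| − n, where M₀ is the set of universally 0-valued items. -/
theorem esw_one_necessary (n t : ℕ) (hn : 0 < n) (ht : 0 < t)
    {M : Type*} [Fintype M] [DecidableEq M]
    (v : Fin n → M → ℝ) (hbin : ∀ i g, v i g = 0 ∨ v i g = 1)
    (A : Fin n → Finset M)
    (hdisj : ∀ i j, i ≠ j → Disjoint (A i) (A j))
    (hcover : Finset.univ.biUnion A = Finset.univ)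
    (hall : ∀ i, quantVal ((t : ℝ) / ((t : ℝ) + 1)) (v i) (A i) = 1) :
    (∃ f : Fin n → M, Function.Injective f ∧ ∀ i, v i (f i) = 1) ∧
      (((Finset.univ.filter fun g => ∀ i, v i g = 0).card : ℤ) ≤
        (t : ℤ) * ((Finset.univ.filter fun g => ¬ ∀ i, v i g = 0).card : ℤ) - (n : ℤ)) :=
  esw_one_necessary_general n t ht v hbin A hdisj hcover hall
end

section
/- Conversely, with all agents having quantile τ = t/(t+1) and binary valuations, if every agent can be matched to a distinct item of value 1 and |M_0| ≤ t·|M_1| − n (where M_0 is the set of universally-0 items and M_1 = M \ M_0), then there exists an allocation of all items in which every agent's quantile value is 1. -/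
open Finset

lemma sort_replicate_zero_add_replicate_one (z l : ℕ) :
    (Multiset.replicate z (0 : ℝ) + Multiset.replicate l 1).sort (· ≤ ·) =
      List.replicate z 0 ++ List.replicate l 1 := by
  refine List.Perm.eq_of_pairwise' (Multiset.pairwise_sort _ _) ?_ ?_
  · simp [List.pairwise_append, List.pairwise_replicate]
  · rw [← Multiset.coe_eq_coe, Multiset.sort_eq, ← Multiset.coe_add, Multiset.coe_replicate,
      Multiset.coe_replicate]

lemma quantVal_union_eq_one {α : Type*} [DecidableEq α] {τ : ℝ} {v : α → ℝ} {Z O : Finset α}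
    (hZO : Disjoint Z O) (hZ : ∀ g ∈ Z, v g = 0) (hO : ∀ g ∈ O, v g = 1) (hτ : τ ≤ 1)
    (hlt : (#Z : ℝ) < τ * #(Z ∪ O)) :
    quantVal τ v (Z ∪ O) = 1 := by
  have hval : (Z ∪ O).val.map v = Multiset.replicate #Z 0 + Multiset.replicate #O 1 := by
    rw [← disjUnion_eq_union Z O hZO, disjUnion_val, Multiset.map_add,
      Multiset.map_congr rfl hZ, Multiset.map_congr rfl hO, Multiset.map_const',
      Multiset.map_const', card_val, card_val]
  have hcard : #(Z ∪ O) = #Z + #O := card_union_of_disjoint hZO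
  have hceil_gt : (#Z : ℤ) < ⌈τ * #(Z ∪ O)⌉ := Int.lt_ceil.2 (mod_cast hlt)
  have hceil_le : ⌈τ * #(Z ∪ O)⌉ ≤ #(Z ∪ O) :=
    Int.ceil_le.2 (mul_le_of_le_one_left (Nat.cast_nonneg _) hτ)
  unfold quantVal
  rw [hval, sort_replicate_zero_add_replicate_one,
    List.getD_append_right _ _ _ _ (by simp; omega), List.getD_replicate _ (by simp; omega)]

lemma quantVal_union_eq_one_of_card_le {α : Type*} [DecidableEq α] {t : ℕ} {v : α → ℝ}
    {Z O : Finset α} (hZO : Disjoint Z O) (hZ : ∀ g ∈ Z, v g = 0) (hO : ∀ g ∈ O, v g = 1)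
    (hcard : #Z + 1 ≤ t * #O) :
    quantVal ((t : ℝ) / (t + 1)) v (Z ∪ O) = 1 := by
  refine quantVal_union_eq_one hZO hZ hO (div_le_one_of_le₀ (by linarith) (by positivity)) ?_
  have hcard' : (#Z : ℝ) + 1 ≤ t * #O := mod_cast hcard
  rw [card_union_of_disjoint hZO, div_mul_eq_mul_div, lt_div_iff₀ (by positivity)]
  push_cast
  nlinarith

lemma exists_fiber_card_le {α ι : Type*} [DecidableEq α] [Fintype ι] [DecidableEq ι] [Nonempty ι]
    (S : Finset α) (c : ι → ℕ) (h : #S ≤ ∑ i, c i) :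
    ∃ b : α → ι, ∀ i, #{g ∈ S | b g = i} ≤ c i := by
  induction S using Finset.induction_on with
  | empty => exact ⟨fun _ => Classical.arbitrary ι, fun i => by simp⟩
  | @insert x S hx ih =>
    rw [card_insert_of_notMem hx] at h
    obtain ⟨b, hb⟩ := ih (by omega)
    have hsum : ∑ i, #{g ∈ S | b g = i} < ∑ i, c i := by
      rw [← card_eq_sum_card_fiberwise (fun g _ => mem_univ (b g))]
      omega
    obtain ⟨i₀, -, hi₀⟩ := exists_lt_of_sum_lt hsum
    refine ⟨Function.update b x i₀, fun i => ?_⟩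
    have hfiber : {g ∈ S | Function.update b x i₀ g = i} = {g ∈ S | b g = i} :=
      filter_congr fun g hg => by rw [Function.update_of_ne (ne_of_mem_of_not_mem hg hx)]
    rw [filter_insert, Function.update_self]
    split_ifs with hi
    · rw [card_insert_of_notMem (fun hmem => hx (mem_filter.1 hmem).1), hfiber, ← hi]
      omega
    · rw [hfiber]
      exact hb i

lemma Function.Injective.exists_leftInverse_forall_imp {ι α : Type*} [Nonempty ι]
    {f : ι → α} (hf : Function.Injective f) (P : ι → α → Prop) (hP : ∀ i, P i (f i)) :
    ∃ a : α → ι, Function.LeftInverse a f ∧ ∀ g, (∃ i, P i g) → P (a g) g := by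
  classical
  let choice : α → ι := fun g => if h : ∃ i, P i g then h.choose else Classical.arbitrary ι
  refine ⟨Function.extend f id choice, fun i => hf.extend_apply _ _ i, fun g hg => ?_⟩
  by_cases hgf : ∃ i, f i = g
  · obtain ⟨i, rfl⟩ := hgf
    rw [hf.extend_apply]
    exact hP i
  · rw [Function.extend_apply' _ _ _ hgf]
    simp only [choice, dif_pos hg]
    exact hg.choose_spec

lemma filter_ite_eq_union {α ι : Type*} [Fintype α] [DecidableEq α] [DecidableEq ι]
    (p : α → Prop) [DecidablePred p] (b a : α → ι) (i : ι) :
    filter (fun g => (if p g then b g else a g) = i) univ =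
      filter (b · = i) (filter p univ) ∪ filter (a · = i) (filter (¬ p ·) univ) := by
  ext g
  by_cases hg : p g <;> simp [hg]

/-- converse of the necessary conditions. With common quantile
τ = t/(t+1) and binary valuations, if every agent can be matched to a distinct
value-1 item and |M₀| ≤ t·|M₁| − n, then an allocation of all items exists in which
every agent's quantile value is 1. -/
theorem esw_one_sufficient (n t : ℕ) (hn : 0 < n) (ht : 0 < t)
    {M : Type*} [Fintype M] [DecidableEq M]
    (v : Fin n → M → ℝ) (hbin : ∀ i g, v i g = 0 ∨ v i g = 1)
    (hmatch : ∃ f : Fin n → M, Function.Injective f ∧ ∀ i, v i (f i) = 1)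
    (hcount : ((Finset.univ.filter fun g => ∀ i, v i g = 0).card : ℤ) ≤
        (t : ℤ) * ((Finset.univ.filter fun g => ¬ ∀ i, v i g = 0).card : ℤ) - (n : ℤ)) :
    ∃ A : Fin n → Finset M,
      (∀ i j, i ≠ j → Disjoint (A i) (A j)) ∧
      Finset.univ.biUnion A = Finset.univ ∧
      (∀ i, quantVal ((t : ℝ) / ((t : ℝ) + 1)) (v i) (A i) = 1) := by
  obtain ⟨f, hf, hf₁⟩ := hmatch
  set M₀ : Finset M := {g | ∀ i, v i g = 0}
  set M₁ : Finset M := {g | ¬ ∀ i, v i g = 0}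
  have : Nonempty (Fin n) := ⟨⟨0, hn⟩⟩
  obtain ⟨a, haf, hav⟩ := hf.exists_leftInverse_forall_imp (fun i g => v i g = 1) hf₁
  have ha₁ : ∀ g ∈ M₁, v (a g) g = 1 := fun g hg => hav g <| by
    obtain ⟨i, hi⟩ := not_forall.1 (mem_filter.1 hg).2
    exact ⟨i, (hbin i g).resolve_left hi⟩
  set L : Fin n → ℕ := fun i => #{g ∈ M₁ | a g = i}
  have hL : ∀ i, 1 ≤ t * L i := fun i => Nat.one_le_iff_ne_zero.2 <| mul_ne_zero ht.ne' <|
    card_ne_zero_of_mem (a := f i) <|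
      mem_filter.2 ⟨mem_filter.2 ⟨mem_univ _, fun h => by simpa [hf₁ i] using h i⟩, haf i⟩
  have hcap : #M₀ ≤ ∑ i, (t * L i - 1) := by
    rw [sum_tsub_distrib _ fun i _ => hL i, ← mul_sum,
      ← card_eq_sum_card_fiberwise fun g _ => mem_univ (a g)]
    simp only [sum_const, card_univ, Fintype.card_fin, smul_eq_mul, mul_one]
    omega
  obtain ⟨b, hb⟩ := exists_fiber_card_le M₀ (fun i => t * L i - 1) hcap
  refine ⟨fun i => {g | (if ∀ j, v j g = 0 then b g else a g) = i},
    fun i j hij => disjoint_filter.2 fun g _ hi hj => hij (hi ▸ hj), by ext g; simp, fun i => ?_⟩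
  dsimp only
  rw [filter_ite_eq_union]
  refine quantVal_union_eq_one_of_card_le
    ((disjoint_filter_filter_not _ _ _).mono (filter_subset _ _) (filter_subset _ _))
    (fun g hg => (mem_filter.1 (mem_filter.1 hg).1).2 i) (fun g hg => ?_) ?_
  · obtain ⟨hg₁, rfl⟩ := mem_filter.1 hg
    exact ha₁ g hg₁
  · exact (Nat.le_sub_one_iff_lt (hL i)).1 (hb i)
end

section
/- With identical valuations v (all agents the same) and common quantile τ over m = kn items, sort items so v(g_1) ≥ … ≥ v(g_m), and let k' = min(k, k − ⌈τk⌉ + 1). The allocation giving agent t the bundle {g_{(t−1)k'+1},…,g_{tk'}} plus arbitrary remaining items (so each bundle has size k) achieves utilitarian social welfare Σ_{t=1}^n v(g_{tk'}), and this is the maximum utilitarian welfare over all balanced allocations. -/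
open Finset Function

section Sorting

variable {α β : Type*} [LinearOrder α] [LinearOrder β]

theorem Finset.sort_map_val_of_antitone {v : α → β} (hv : Antitone v) (S : Finset α) :
    (S.val.map v).sort (· ≤ ·) = ((S.sort (· ≤ ·)).map v).reverse :=
  List.Perm.eq_of_pairwise' (Multiset.pairwise_sort _ _)
    (by
      rw [List.pairwise_reverse, List.pairwise_map]
      exact (S.pairwise_sort _).imp (hv ·))
    (Multiset.coe_eq_coe.mp (by
      rw [Multiset.sort_eq, Multiset.coe_reverse, ← Multiset.map_coe, Finset.sort_eq]))

theorem Finset.sort_union_of_forall_lt {S T : Finset α} (h : ∀ x ∈ S, ∀ y ∈ T, x < y) :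
    (S ∪ T).sort (· ≤ ·) = S.sort (· ≤ ·) ++ T.sort (· ≤ ·) := by
  have hST : Disjoint S T := disjoint_left.mpr fun x hxS hxT => (h x hxS x hxT).false
  refine List.Perm.eq_of_pairwise' (pairwise_sort _ _) ?_ (Multiset.coe_eq_coe.mp ?_)
  · refine List.pairwise_append.mpr ⟨pairwise_sort _ _, pairwise_sort _ _, ?_⟩
    intro x hx y hy
    exact (h x ((mem_sort _).mp hx) y ((mem_sort _).mp hy)).le
  · rw [sort_eq, ← disjUnion_eq_union S T hST, disjUnion_val, ← Multiset.coe_add, sort_eq,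
      sort_eq]

end Sorting

theorem Finset.sort_Ico_add (a m : ℕ) : (Ico a (a + m)).sort (· ≤ ·) = List.range' a m := by
  rw [Nat.Ico_eq_range', Nat.add_sub_cancel_left]
  exact (Multiset.coe_sort _ _).trans
    (List.mergeSort_eq_self _ (by simpa using List.pairwise_le_range' (s := a) (n := m)))

/-- Indexed from `0`; the junk value `0` when `j ≥ #S`. -/
def Finset.nthSmallest (S : Finset ℕ) (j : ℕ) : ℕ := (S.sort (· ≤ ·)).getD j 0

theorem Finset.succ_le_card_filter_le_nthSmallest {S : Finset ℕ} {j : ℕ} (hj : j < #S) :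
    j + 1 ≤ #{x ∈ S | x ≤ S.nthSmallest j} := by
  let e := S.orderEmbOfFin rfl
  have he : S.nthSmallest j = e ⟨j, hj⟩ := by
    rw [nthSmallest, orderEmbOfFin_apply, List.getD_eq_getElem _ _ (by simpa using hj)]
    rfl
  calc j + 1 = #((Iic (⟨j, hj⟩ : Fin #S)).map e.toEmbedding) := by simp
    _ ≤ #{x ∈ S | x ≤ S.nthSmallest j} := by
      refine card_le_card fun x hx => ?_
      obtain ⟨i, hi, rfl⟩ := mem_map.mp hx
      exact mem_filter.mpr ⟨S.orderEmbOfFin_mem rfl i, he ▸ e.monotone (mem_Iic.mp hi)⟩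

/-- `k' = min(k, k − ⌈τk⌉ + 1)`: a bundle of size `k` is worth its `k'`-th best item. -/
noncomputable def quantileRank (τ : ℝ) (k : ℕ) : ℕ := min k (k - ⌈τ * (k : ℝ)⌉.toNat + 1)

theorem quantVal_eq_nthSmallest {v : ℕ → ℝ} (hv : Antitone v) {τ : ℝ} (hτ : τ ≤ 1) {k : ℕ}
    (hk : 0 < k) {S : Finset ℕ} (hS : #S = k) :
    quantVal τ v S = v (S.nthSmallest (quantileRank τ k - 1)) := by
  have hq : ⌈τ * (k : ℝ)⌉.toNat ≤ k := by
    have : ⌈τ * (k : ℝ)⌉ ≤ k :=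
      Int.ceil_le.mpr (by push_cast; nlinarith [(k.cast_nonneg : (0 : ℝ) ≤ k)])
    omega
  have hlen : (S.sort (· ≤ ·)).length = k := by rw [length_sort, hS]
  rw [quantVal, sort_map_val_of_antitone hv, hS, nthSmallest, quantileRank,
    List.getD_eq_getElem _ _ (by simp only [List.length_reverse, List.length_map]; omega),
    List.getElem_reverse, List.getElem_map, List.getD_eq_getElem _ _ (by omega)]
  congr 2
  simp only [List.length_map, hlen]
  omega

theorem card_mul_le_of_pairwise_disjoint {ι : Type*} {B : ι → Finset ℕ}
    (hB : Pairwise (Disjoint on B)) {b : ι → ℕ} {c : ℕ} (hb : ∀ i, c ≤ #{x ∈ B i | x ≤ b i})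
    {I : Finset ι} {y : ℕ} (hy : ∀ i ∈ I, b i ≤ y) : #I * c ≤ y + 1 := by
  classical
  calc #I * c = ∑ _i ∈ I, c := by rw [sum_const, smul_eq_mul]
    _ ≤ ∑ i ∈ I, #{x ∈ B i | x ≤ y} := sum_le_sum fun i hi =>
        (hb i).trans <| card_le_card fun x hx => by
          rw [mem_filter] at hx ⊢
          exact ⟨hx.1, hx.2.trans (hy i hi)⟩
    _ = #(I.biUnion fun i => {x ∈ B i | x ≤ y}) :=
        (card_biUnion fun i _ j _ hij => disjoint_filter_filter (hB hij)).symm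
    _ ≤ #(range (y + 1)) := card_le_card fun x hx => by
        obtain ⟨_, _, hx⟩ := mem_biUnion.mp hx
        exact mem_range_succ_iff.mpr (mem_filter.mp hx).2
    _ = y + 1 := card_range _

theorem sum_le_sum_of_card_mul_le {M : Type*} [AddCommMonoid M] [PartialOrder M]
    [IsOrderedAddMonoid M] {f : ℕ → M} (hf : Antitone f) {n c : ℕ} (b : Fin n → ℕ)
    (hb : ∀ (I : Finset (Fin n)) (y : ℕ), (∀ i ∈ I, b i ≤ y) → #I * c ≤ y + 1) :
    ∑ i, f (b i) ≤ ∑ t : Fin n, f (t * c + c - 1) := by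
  let σ := Tuple.sort b
  rw [← Equiv.sum_comp σ]
  refine sum_le_sum fun t _ => hf ?_
  have hcount := hb ((Iic t).map σ.toEmbedding) (b (σ t)) fun i hi => by
    obtain ⟨s, hs, rfl⟩ := mem_map.mp hi
    exact Tuple.monotone_sort b (mem_Iic.mp hs)
  rw [card_map, Fin.card_Iic, Nat.succ_mul] at hcount
  omega

theorem sum_quantVal_le_of_pairwise_disjoint {v : ℕ → ℝ} (hv : Antitone v) {τ : ℝ}
    (hτ : τ ≤ 1) {n k : ℕ} (hk : 0 < k) {B : Fin n → Finset ℕ} (hB : Pairwise (Disjoint on B))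
    (hBk : ∀ i, #(B i) = k) :
    ∑ i, quantVal τ v (B i) ≤ ∑ t : Fin n, v (t * quantileRank τ k + quantileRank τ k - 1) := by
  have hc : quantileRank τ k ≤ k := min_le_left _ _
  have hc0 : 0 < quantileRank τ k := lt_min hk (Nat.succ_pos _)
  simp_rw [quantVal_eq_nthSmallest hv hτ hk (hBk _)]
  refine sum_le_sum_of_card_mul_le hv _ fun I y hy =>
    card_mul_le_of_pairwise_disjoint hB (fun i => ?_) hy
  have := succ_le_card_filter_le_nthSmallest (S := B i) (j := quantileRank τ k - 1)
    (by rw [hBk]; omega)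
  omega

theorem Nat.mul_add_le_mul_of_lt {s t : ℕ} (h : s < t) (c : ℕ) : s * c + c ≤ t * c := by
  simpa only [Nat.succ_mul] using Nat.mul_le_mul_right c h

def greedyBundle (n c d t : ℕ) : Finset ℕ :=
  Ico (t * c) (t * c + c) ∪ Ico (n * c + t * d) (n * c + t * d + d)

section Greedy

variable {n c d t : ℕ}

theorem lt_of_mem_greedyBundle_blocks (ht : t < n) {x y : ℕ} (hx : x ∈ Ico (t * c) (t * c + c))
    (hy : y ∈ Ico (n * c + t * d) (n * c + t * d + d)) : x < y := by
  have := Nat.mul_add_le_mul_of_lt ht c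
  rw [mem_Ico] at hx hy
  omega

theorem card_greedyBundle (ht : t < n) : #(greedyBundle n c d t) = c + d := by
  rw [greedyBundle, card_union_of_disjoint (disjoint_left.mpr fun x hx hx' =>
      (lt_of_mem_greedyBundle_blocks ht hx hx').false), Nat.card_Ico, Nat.card_Ico]
  omega

theorem nthSmallest_greedyBundle (ht : t < n) (hc : 0 < c) :
    (greedyBundle n c d t).nthSmallest (c - 1) = t * c + c - 1 := by
  rw [nthSmallest, greedyBundle,
    sort_union_of_forall_lt fun x hx y hy => lt_of_mem_greedyBundle_blocks ht hx hy,
    sort_Ico_add, sort_Ico_add, List.getD_append _ _ _ _ (by simp only [List.length_range']; omega),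
    List.getD_eq_getElem _ _ (by simp only [List.length_range']; omega), List.getElem_range']
  omega

theorem disjoint_greedyBundle {s : ℕ} (hs : s < n) (ht : t < n) (hst : s ≠ t) :
    Disjoint (greedyBundle n c d s) (greedyBundle n c d t) := by
  wlog h : s < t generalizing s t
  · exact (this ht hs hst.symm (by omega)).symm
  have := Nat.mul_add_le_mul_of_lt h c
  have := Nat.mul_add_le_mul_of_lt h d
  have := Nat.mul_add_le_mul_of_lt ht c
  rw [disjoint_left]
  intro x
  simp only [greedyBundle, mem_union, mem_Ico]
  omega

theorem biUnion_greedyBundle {k : ℕ} (hk : c + d = k) :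
    univ.biUnion (fun t : Fin n => greedyBundle n c d t) = range (k * n) := by
  refine eq_of_subset_of_card_le (fun x hx => ?_) ?_
  · obtain ⟨t, -, hx⟩ := mem_biUnion.mp hx
    have := Nat.mul_add_le_mul_of_lt t.isLt c
    have := Nat.mul_add_le_mul_of_lt t.isLt d
    simp only [greedyBundle, mem_union, mem_Ico] at hx
    rw [mem_range, ← hk, add_mul, mul_comm c, mul_comm d]
    omega
  · rw [card_range, card_biUnion fun s _ t _ hst =>
      disjoint_greedyBundle s.isLt t.isLt (Fin.val_ne_of_ne hst),
      sum_congr rfl fun t _ => card_greedyBundle t.isLt, sum_const, card_univ, Fintype.card_fin,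
      smul_eq_mul, mul_comm, hk]

end Greedy

theorem identical_balanced_usw_greedy_general (n k : ℕ) (hk : 0 < k)
    (τ : ℝ) (hτ1 : τ ≤ 1)
    (v : ℕ → ℝ) (hmono : ∀ i j : ℕ, i ≤ j → v j ≤ v i) :
    IsGreatest {u : ℝ | ∃ A : Fin n → Finset ℕ,
        (∀ i j, i ≠ j → Disjoint (A i) (A j)) ∧
        Finset.univ.biUnion A = Finset.range (k * n) ∧
        (∀ i, (A i).card = k) ∧
        u = ∑ i, quantVal τ v (A i)}
      (∑ t : Fin n,
        v ((t : ℕ) * min k (k - (⌈τ * (k : ℝ)⌉).toNat + 1) +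
            min k (k - (⌈τ * (k : ℝ)⌉).toNat + 1) - 1)) := by
  change IsGreatest _ (∑ t : Fin n, v (t * quantileRank τ k + quantileRank τ k - 1))
  set c := quantileRank τ k
  have hck : c + (k - c) = k := Nat.add_sub_cancel' (min_le_left _ _)
  have hc : 0 < c := lt_min hk (Nat.succ_pos _)
  have hcard (t : Fin n) : #(greedyBundle n c (k - c) t) = k :=
    (card_greedyBundle t.isLt).trans hck
  refine ⟨⟨fun t => greedyBundle n c (k - c) t,
    fun s t hst => disjoint_greedyBundle s.isLt t.isLt (Fin.val_ne_of_ne hst),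
    biUnion_greedyBundle hck, hcard, sum_congr rfl fun t _ => ?_⟩, ?_⟩
  · rw [quantVal_eq_nthSmallest hmono hτ1 hk (hcard t), nthSmallest_greedyBundle t.isLt hc]
  · rintro _ ⟨B, hB, -, hBk, rfl⟩
    exact sum_quantVal_le_of_pairwise_disjoint hmono hτ1 hk hB hBk

/-- identical valuations, balanced allocations of the items
{0,…,kn−1} sorted so v 0 ≥ v 1 ≥ …. With k' = min(k, k − ⌈τk⌉ + 1), the greedy
allocation achieves utilitarian welfare ∑ₜ v(t·k' + k' − 1) (0-indexed), and this is
the maximum utilitarian welfare over all balanced allocations. -/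
theorem identical_balanced_usw_greedy (n k : ℕ) (hn : 0 < n) (hk : 0 < k)
    (τ : ℝ) (hτ0 : 0 ≤ τ) (hτ1 : τ ≤ 1)
    (v : ℕ → ℝ) (hmono : ∀ i j : ℕ, i ≤ j → v j ≤ v i) :
    IsGreatest {u : ℝ | ∃ A : Fin n → Finset ℕ,
        (∀ i j, i ≠ j → Disjoint (A i) (A j)) ∧
        Finset.univ.biUnion A = Finset.range (k * n) ∧
        (∀ i, (A i).card = k) ∧
        u = ∑ i, quantVal τ v (A i)}
      (∑ t : Fin n,
        v ((t : ℕ) * min k (k - (⌈τ * (k : ℝ)⌉).toNat + 1) +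
            min k (k - (⌈τ * (k : ℝ)⌉).toNat + 1) - 1)) :=
  identical_balanced_usw_greedy_general n k hk τ hτ1 v hmono
end
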